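/- arXiv:2303.12921 — 3 statements merged into one kernel-verified Lean document; each statement's English description precedes it below -/
import Mathlib

section
/- Fix m ∈ ℕ and β, ε, δ ∈ (0,1]. If an algorithm A : X^m → Y is (β,ε,δ)-one-way perfectly generalizing, then A is (β, 0, 2ε + δ)-perfectly generalizing. -/
open MeasureTheory

noncomputable section

/-- The distribution of `m` i.i.d. draws from `D`. -/
def iidSample {X : Type*} [MeasurableSpace X] (D : Measure X) (m : ℕ) :
    Measure (Fin m → X) :=
  Measure.pi fun _ => D

/-- Distributions `P` and `Q` are `(ε,δ)`-indistinguishable: for every set `O`,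
`e^{-ε}(P(O) - δ) ≤ Q(O) ≤ e^ε · P(O) + δ`. -/
def Indist {Y : Type*} [MeasurableSpace Y] (ε δ : ℝ) (P Q : Measure Y) : Prop :=
  ∀ O : Set Y,
    Real.exp (-ε) * ((P O).toReal - δ) ≤ (Q O).toReal ∧
    (Q O).toReal ≤ Real.exp ε * (P O).toReal + δ

/-- `A` is `(β,ε,δ)`-one-way perfectly generalizing: for every distribution `D`
there is a simulator distribution `Sim` such that with probability at least
`1-β` over the i.i.d. sample `S`, for every set `O`,
`Pr[A(S) ∈ O] ≤ e^ε · Sim(O) + δ`. -/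
def OneWayPG {X Y : Type*} [MeasurableSpace X] [MeasurableSpace Y] {m : ℕ}
    (A : (Fin m → X) → Measure Y) (β ε δ : ℝ) : Prop :=
  ∀ D : Measure X, IsProbabilityMeasure D →
    ∃ Sim : Measure Y, IsProbabilityMeasure Sim ∧
      1 - β ≤ ((iidSample D m)
        {S | ∀ O : Set Y, (A S O).toReal ≤ Real.exp ε * (Sim O).toReal + δ}).toReal

/-- `A` is `(β,ε,δ)`-perfectly generalizing. -/
def PerfectlyGeneralizing {X Y : Type*} [MeasurableSpace X] [MeasurableSpace Y] {m : ℕ}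
    (A : (Fin m → X) → Measure Y) (β ε δ : ℝ) : Prop :=
  ∀ D : Measure X, IsProbabilityMeasure D →
    ∃ Sim : Measure Y, IsProbabilityMeasure Sim ∧
      1 - β ≤ ((iidSample D m) {S | Indist ε δ (A S) Sim}).toReal

/-- One-way perfect generalization implies (two-way) perfect generalization
with parameters `(β, 0, 2ε + δ)`. -/
theorem oneWayPG_implies_PG {X Y : Type*} [MeasurableSpace X] [MeasurableSpace Y]
    {m : ℕ} (A : (Fin m → X) → Measure Y)
    (hA : ∀ S, IsProbabilityMeasure (A S))
    (β ε δ : ℝ)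
    (hβ : 0 < β) (hβ1 : β ≤ 1) (hε : 0 < ε) (hε1 : ε ≤ 1) (hδ : 0 < δ) (hδ1 : δ ≤ 1)
    (h : OneWayPG A β ε δ) :
    PerfectlyGeneralizing A β 0 (2 * ε + δ) := by
  intro D hD
  obtain ⟨Sim, hSim, hmeas⟩ := h D hD
  refine ⟨Sim, hSim, ?_⟩
  haveI : IsProbabilityMeasure (iidSample D m) := by
    unfold iidSample; infer_instance
  refine le_trans hmeas ?_
  have hsub : {S | ∀ O : Set Y, (A S O).toReal ≤ Real.exp ε * (Sim O).toReal + δ}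
      ⊆ {S | Indist 0 (2 * ε + δ) (A S) Sim} := by
    intro S hS
    haveI := hA S
    intro O
    have hexp : Real.exp ε ≤ 1 + 2 * ε := by
      have hc := convexOn_exp.2 (Set.mem_univ (0:ℝ)) (Set.mem_univ (1:ℝ))
        (show (0:ℝ) ≤ 1 - ε by linarith) (le_of_lt hε)
        (show (1 - ε) + ε = 1 by ring)
      simp only [smul_eq_mul, mul_zero, mul_one, zero_add, Real.exp_zero] at hc
      nlinarith [Real.exp_one_lt_d9]
    have hSimO1 : (Sim O).toReal ≤ 1 := by
      have := prob_le_one (μ := Sim) (s := O)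
      simpa using ENNReal.toReal_mono (by simp) this
    have hASO1 : (A S O).toReal ≤ 1 := by
      have := prob_le_one (μ := A S) (s := O)
      simpa using ENNReal.toReal_mono (by simp) this
    have hSimOnn : 0 ≤ (Sim O).toReal := ENNReal.toReal_nonneg
    have hASOnn : 0 ≤ (A S O).toReal := ENNReal.toReal_nonneg
    constructor
    · -- left: P O - (2ε+δ) ≤ Sim O
      have h1 := hS O
      simp only [neg_zero, Real.exp_zero, one_mul]
      nlinarith
    · -- right: Sim O ≤ P O + (2ε+δ)
      set M := toMeasurable (A S) O with hM
      have hMmeas : MeasurableSet M := measurableSet_toMeasurable _ _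
      have hOM : O ⊆ M := subset_toMeasurable _ _
      have hPM : (A S M).toReal = (A S O).toReal := by
        rw [measure_toMeasurable]
      have hSimOM : (Sim O).toReal ≤ (Sim M).toReal :=
        ENNReal.toReal_mono (by simp) (measure_mono hOM)
      have hPMc : ((A S) Mᶜ).toReal = 1 - ((A S) M).toReal := by
        rw [prob_compl_eq_one_sub hMmeas]
        rw [ENNReal.toReal_sub_of_le (prob_le_one) (by simp)]
        simp
      have hSimMc : (Sim Mᶜ).toReal = 1 - (Sim M).toReal := by
        rw [prob_compl_eq_one_sub hMmeas]
        rw [ENNReal.toReal_sub_of_le (prob_le_one) (by simp)]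
        simp
      have h2 := hS Mᶜ
      rw [hPMc, hSimMc] at h2
      have hSimM1 : (Sim M).toReal ≤ 1 := by
        have := prob_le_one (μ := Sim) (s := M)
        simpa using ENNReal.toReal_mono (by simp) this
      have hPM1 : ((A S) M).toReal ≤ 1 := by
        have := prob_le_one (μ := A S) (s := M)
        simpa using ENNReal.toReal_mono (by simp) this
      have hPMnn : 0 ≤ ((A S) M).toReal := ENNReal.toReal_nonneg
      have hexp2 : Real.exp ε ≤ 1 + 2 * ε := hexp
      have hexp3 : 1 ≤ Real.exp ε := Real.one_le_exp (le_of_lt hε)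
      simp only [Real.exp_zero, one_mul]
      -- from h2: 1 - P M ≤ e^ε (1 - Sim M) + δ
      nlinarith [hPM ▸ hPM1]
  exact ENNReal.toReal_mono (by simp [measure_ne_top]) (measure_mono hsub)
end
end

section
/- Fix m ∈ ℕ and β, ε, δ ∈ (0,1). Let A : X^m → Y be a (β,ε,δ)-one-way perfectly generalizing algorithm with finite output space Y. Then there exists an algorithm A', taking a dataset S ∈ X^m and a shared random seed r, such that for every fixed dataset S the distribution of A'(S;r) over a random seed r equals the output distribution of A(S), and A' is 4(β + 2ε + δ)-replicable. -/
open MeasureTheory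

noncomputable section

/-- A seed-based algorithm `A'` with seed distribution `ν` is `ρ`-replicable. -/
def IsReplicable {X R Y : Type*} [MeasurableSpace X] [MeasurableSpace R]
    (m : ℕ) (A : (Fin m → X) → R → Y) (ν : Measure R) (ρ : ℝ) : Prop :=
  ∀ D : Measure X, IsProbabilityMeasure D →
    1 - ρ ≤
      ((((iidSample D m).prod (iidSample D m)).prod ν)
        {q | A q.1.1 q.2 = A q.1.2 q.2}).toReal

open scoped ENNReal NNReal

set_option linter.unusedSectionVars false
namespace OWPGAux
open scoped Classical

variable {Y : Type*} [MeasurableSpace Y] [Finite Y]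

/-- The measurable atom containing `y`. -/
def atomOf (y : Y) : Set Y := ⋂₀ {B : Set Y | MeasurableSet B ∧ y ∈ B}

lemma measurableSet_atomOf (y : Y) : MeasurableSet (atomOf y) := by
  haveI : Finite (Set Y) := inferInstance
  exact MeasurableSet.sInter (Set.to_countable _) (fun t ht => ht.1)

lemma mem_atomOf_self (y : Y) : y ∈ atomOf y := by
  intro B hB; exact hB.2

lemma atomOf_subset {y : Y} {B : Set Y} (hB : MeasurableSet B) (hy : y ∈ B) :
    atomOf y ⊆ B := Set.sInter_subset_of_mem ⟨hB, hy⟩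

lemma atomOf_eq_of_mem {y z : Y} (hz : z ∈ atomOf y) : atomOf z = atomOf y := by
  have key : ∀ B : Set Y, MeasurableSet B → (y ∈ B ↔ z ∈ B) := by
    intro B hB
    constructor
    · intro hy; exact atomOf_subset hB hy hz
    · intro hzB
      by_contra hyB
      exact (atomOf_subset hB.compl hyB hz) hzB
  have : {B : Set Y | MeasurableSet B ∧ z ∈ B} = {B : Set Y | MeasurableSet B ∧ y ∈ B} := by
    apply Set.ext
    intro B
    simp only [Set.mem_setOf_eq]
    exact and_congr_right fun hB => (key B hB).symm
  unfold atomOf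
  rw [this]

lemma atomOf_disj {y z : Y} (h : atomOf y ≠ atomOf z) : Disjoint (atomOf y) (atomOf z) := by
  rw [Set.disjoint_left]
  intro w hwy hwz
  exact h ((atomOf_eq_of_mem hwy).symm.trans (atomOf_eq_of_mem hwz))


section Enum
variable (Y : Type*) [MeasurableSpace Y] [Fintype Y]

/-- The finite set of atoms. -/
def ATOMS : Finset (Set Y) := Finset.image atomOf Finset.univ

/-- Number of atoms. -/
def nAtoms : ℕ := (ATOMS Y).card

/-- Enumeration of the atoms. -/
def At : Fin (nAtoms Y) → Set Y := fun i => ((ATOMS Y).equivFin.symm i : (ATOMS Y))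

variable {Y}

lemma At_mem (i : Fin (nAtoms Y)) : At Y i ∈ ATOMS Y := ((ATOMS Y).equivFin.symm i).2

lemma At_exists_atom (i : Fin (nAtoms Y)) : ∃ y : Y, At Y i = atomOf y := by
  have := At_mem i
  simp only [ATOMS, Finset.mem_image] at this
  obtain ⟨y, _, hy⟩ := this
  exact ⟨y, hy.symm⟩

lemma exists_At (y : Y) : ∃ i, At Y i = atomOf y := by
  have hmem : atomOf y ∈ ATOMS Y := Finset.mem_image_of_mem _ (Finset.mem_univ y)
  refine ⟨(ATOMS Y).equivFin ⟨atomOf y, hmem⟩, ?_⟩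
  simp [At]

lemma At_injective : Function.Injective (At Y) := by
  intro i j hij
  have : ((ATOMS Y).equivFin.symm i) = ((ATOMS Y).equivFin.symm j) := Subtype.ext hij
  exact (ATOMS Y).equivFin.symm.injective this

lemma measurableSet_At (i : Fin (nAtoms Y)) : MeasurableSet (At Y i) := by
  obtain ⟨y, hy⟩ := At_exists_atom i
  rw [hy]; exact measurableSet_atomOf y

lemma At_nonempty (i : Fin (nAtoms Y)) : (At Y i).Nonempty := by
  obtain ⟨y, hy⟩ := At_exists_atom i
  rw [hy]; exact ⟨y, mem_atomOf_self y⟩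

lemma At_disjoint {i j : Fin (nAtoms Y)} (h : i ≠ j) : Disjoint (At Y i) (At Y j) := by
  obtain ⟨y, hy⟩ := At_exists_atom i
  obtain ⟨z, hz⟩ := At_exists_atom j
  rw [hy, hz]
  apply atomOf_disj
  intro hcon
  exact h (At_injective (by rw [hy, hz, hcon]))

lemma decomp_meas {B : Set Y} (hB : MeasurableSet B) :
    B = ⋃ i ∈ Finset.univ.filter (fun i => At Y i ⊆ B), At Y i := by
  apply Set.eq_of_subset_of_subset
  · intro y hy
    obtain ⟨i, hi⟩ := exists_At y
    have h1 : i ∈ Finset.univ.filter (fun i => At Y i ⊆ B) := by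
      simp only [Finset.mem_filter, Finset.mem_univ, true_and]
      rw [hi]; exact atomOf_subset hB hy
    have h2 : y ∈ At Y i := by rw [hi]; exact mem_atomOf_self y
    exact Set.mem_biUnion h1 h2
  · intro y hy
    simp only [Set.mem_iUnion] at hy
    obtain ⟨i, hi, hyi⟩ := hy
    simp only [Finset.mem_filter] at hi
    exact hi.2 hyi

lemma measure_eq_sum_At (μ : Measure Y) {B : Set Y} (hB : MeasurableSet B) :
    μ B = ∑ i ∈ Finset.univ.filter (fun i => At Y i ⊆ B), μ (At Y i) := by
  conv_lhs => rw [decomp_meas hB]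
  rw [measure_biUnion_finset ?_ (fun i _ => measurableSet_At i)]
  intro i _ j _ hij
  exact At_disjoint hij

lemma At_subset_iff_meets {B : Set Y} (hB : MeasurableSet B) {i : Fin (nAtoms Y)}
    {y : Y} (hy : y ∈ At Y i) (hyB : y ∈ B) : At Y i ⊆ B := by
  obtain ⟨z, hz⟩ := At_exists_atom i
  rw [hz] at hy ⊢
  rw [← atomOf_eq_of_mem hy]
  exact atomOf_subset hB hyB

end Enum


section Seed

/-- Uniform measure on `[0,1)`. -/
def μU : Measure ℝ := volume.restrict (Set.Ico 0 1)

instance : IsProbabilityMeasure μU := by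
  constructor
  rw [μU, Measure.restrict_apply_univ, Real.volume_Ico]
  norm_num

variable (n K : ℕ) [NeZero n]

lemma n_pos : 0 < n := Nat.pos_of_ne_zero (NeZero.ne n)

/-- Uniform measure on `Fin n`. -/
def νC : Measure (Fin n) := ((n : ℝ≥0∞))⁻¹ • Measure.count

lemma νC_singleton (i : Fin n) : νC n {i} = ((n : ℝ≥0∞))⁻¹ := by
  rw [νC, Measure.smul_apply, Measure.count_singleton, smul_eq_mul, mul_one]

instance : IsProbabilityMeasure (νC n) := by
  constructor
  rw [νC, Measure.smul_apply, smul_eq_mul]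
  rw [Measure.count_univ, ENat.card_eq_coe_fintype_card, Fintype.card_fin, ENat.toENNReal_coe]
  exact ENNReal.inv_mul_cancel (by exact_mod_cast (n_pos n).ne') (by simp)

/-- One round seed measure: uniform atom × uniform `[0,1)`. -/
def wR : Measure (Fin n × ℝ) := (νC n).prod μU

instance : IsProbabilityMeasure (wR n) := by
  rw [wR]; infer_instance

/-- Seed space: `K` rounds plus one fallback uniform. -/
abbrev Seed := (Fin K → Fin n × ℝ) × ℝ

/-- Full seed measure. -/
def seedM : Measure (Seed n K) := (Measure.pi fun _ : Fin K => wR n).prod μU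

instance : IsProbabilityMeasure (Measure.pi fun _ : Fin K => wR n) := by
  infer_instance

instance : IsProbabilityMeasure (seedM n K) := by
  rw [seedM]; infer_instance

lemma μU_Iio {a : ℝ} (h0 : 0 ≤ a) (h1 : a ≤ 1) : μU (Set.Iio a) = ENNReal.ofReal a := by
  rw [μU, Measure.restrict_apply' measurableSet_Ico]
  have : Set.Iio a ∩ Set.Ico 0 1 = Set.Ico 0 a := by
    ext u
    simp only [Set.mem_inter_iff, Set.mem_Iio, Set.mem_Ico]
    constructor
    · rintro ⟨h, h2, _⟩; exact ⟨h2, h⟩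
    · rintro ⟨h2, h⟩; exact ⟨h, h2, lt_of_lt_of_le h h1⟩
  rw [this, Real.volume_Ico, sub_zero]

lemma μU_Ico {a b : ℝ} (h0 : 0 ≤ a) (hab : a ≤ b) (h1 : b ≤ 1) :
    μU (Set.Ico a b) = ENNReal.ofReal (b - a) := by
  rw [μU, Measure.restrict_apply' measurableSet_Ico]
  have : Set.Ico a b ∩ Set.Ico 0 1 = Set.Ico a b := by
    apply Set.inter_eq_self_of_subset_left
    intro u hu
    exact ⟨le_trans h0 hu.1, lt_of_lt_of_le hu.2 h1⟩
  rw [this, Real.volume_Ico]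

variable {n}

/-- The per-round acceptance set for level function `f`. -/
def accSet (f : Fin n → ℝ) : Set (Fin n × ℝ) := {x | x.2 < f x.1}

lemma accSet_eq (f : Fin n → ℝ) : accSet f = ⋃ i, ({i} ×ˢ Set.Iio (f i)) := by
  ext x
  simp only [accSet, Set.mem_setOf_eq, Set.mem_iUnion, Set.mem_prod, Set.mem_singleton_iff,
    Set.mem_Iio]
  constructor
  · intro hx; exact ⟨x.1, rfl, hx⟩
  · rintro ⟨i, hi, hx⟩; rw [hi]; exact hx

lemma measurableSet_accSet (f : Fin n → ℝ) : MeasurableSet (accSet f) := by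
  rw [accSet_eq]
  exact MeasurableSet.iUnion fun i =>
    (measurableSet_singleton i).prod measurableSet_Iio

lemma wR_accSet {f : Fin n → ℝ} (hf : ∀ i, 0 ≤ f i ∧ f i ≤ 1) :
    wR n (accSet f) = ENNReal.ofReal ((∑ i, f i) / n) := by
  rw [accSet_eq, measure_iUnion ?_ (fun i => (measurableSet_singleton i).prod measurableSet_Iio)]
  · rw [tsum_fintype]
    have : ∀ i : Fin n, wR n ({i} ×ˢ Set.Iio (f i)) = ENNReal.ofReal (f i / n) := by
      intro i
      rw [wR, Measure.prod_prod, νC_singleton, μU_Iio (hf i).1 (hf i).2]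
      rw [div_eq_mul_inv, ENNReal.ofReal_mul (hf i).1, mul_comm]
      congr 1
      rw [← ENNReal.ofReal_natCast n, ← ENNReal.ofReal_inv_of_pos (by exact_mod_cast n_pos n)]
    rw [Finset.sum_congr rfl (fun i _ => this i), ← ENNReal.ofReal_sum_of_nonneg, Finset.sum_div]
    intro i _
    exact div_nonneg (hf i).1 (by positivity)
  · intro i j hij
    simp only [Function.onFun]
    apply Set.disjoint_prod.mpr
    left
    exact Set.disjoint_singleton.mpr hij

end Seed


section InvCDF
variable {n : ℕ} [NeZero n]

/-- Partial sums of `f` over `Fin n`, indexed by `ℕ`. -/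
def cumul (f : Fin n → ℝ) (k : ℕ) : ℝ :=
  ∑ j ∈ Finset.univ.filter (fun j : Fin n => (j : ℕ) < k), f j

lemma cumul_zero (f : Fin n → ℝ) : cumul f 0 = 0 := by
  rw [cumul]
  apply Finset.sum_eq_zero
  intro j hj
  simp at hj

lemma cumul_mono {f : Fin n → ℝ} (hf : ∀ i, 0 ≤ f i) : Monotone (cumul f) := by
  intro k l hkl
  apply Finset.sum_le_sum_of_subset_of_nonneg
  · intro j hj
    simp only [Finset.mem_filter, Finset.mem_univ, true_and] at hj ⊢
    omega
  · intro j _ _; exact hf j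

lemma cumul_nonneg {f : Fin n → ℝ} (hf : ∀ i, 0 ≤ f i) (k : ℕ) : 0 ≤ cumul f k := by
  have := cumul_mono hf (Nat.zero_le k)
  rwa [cumul_zero] at this

lemma cumul_succ {f : Fin n → ℝ} {k : ℕ} (hk : k < n) :
    cumul f (k + 1) = cumul f k + f ⟨k, hk⟩ := by
  rw [cumul, cumul]
  have : Finset.univ.filter (fun j : Fin n => (j : ℕ) < k + 1)
      = insert (⟨k, hk⟩ : Fin n) (Finset.univ.filter (fun j : Fin n => (j : ℕ) < k)) := by
    ext j
    simp only [Finset.mem_filter, Finset.mem_univ, true_and, Finset.mem_insert, Fin.ext_iff]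
    omega
  rw [this, Finset.sum_insert (by simp)]
  ring

lemma cumul_of_ge {f : Fin n → ℝ} {k : ℕ} (hk : n ≤ k) : cumul f k = ∑ i, f i := by
  rw [cumul]
  apply Finset.sum_congr ?_ (fun _ _ => rfl)
  apply Finset.filter_true_of_mem
  intro j _
  exact lt_of_lt_of_le j.2 hk

/-- Inverse-CDF sampling from the vector `f` given a uniform `u`. -/
def invCDF (f : Fin n → ℝ) (u : ℝ) : Fin n :=
  if h : ∃ i : Fin n, u ∈ Set.Ico (cumul f i) (cumul f ((i : ℕ) + 1)) then h.choose
  else ⟨0, n_pos n⟩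

lemma invCDF_unique {f : Fin n → ℝ} (hf : ∀ i, 0 ≤ f i) {u : ℝ} {i j : Fin n}
    (hi : u ∈ Set.Ico (cumul f i) (cumul f ((i : ℕ) + 1)))
    (hj : u ∈ Set.Ico (cumul f j) (cumul f ((j : ℕ) + 1))) : i = j := by
  rcases lt_trichotomy (i : ℕ) (j : ℕ) with hlt | heq | hgt
  · exfalso
    have : cumul f ((i : ℕ) + 1) ≤ cumul f j := cumul_mono hf hlt
    linarith [hi.2, hj.1]
  · exact Fin.ext heq
  · exfalso
    have : cumul f ((j : ℕ) + 1) ≤ cumul f i := cumul_mono hf hgt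
    linarith [hi.1, hj.2]

lemma invCDF_eq {f : Fin n → ℝ} (hf : ∀ i, 0 ≤ f i) {u : ℝ} {i : Fin n}
    (hu : u ∈ Set.Ico (cumul f i) (cumul f ((i : ℕ) + 1))) : invCDF f u = i := by
  have h : ∃ i : Fin n, u ∈ Set.Ico (cumul f i) (cumul f ((i : ℕ) + 1)) := ⟨i, hu⟩
  rw [invCDF, dif_pos h]
  exact invCDF_unique hf h.choose_spec hu

lemma invCDF_exists {f : Fin n → ℝ} (hf : ∀ i, 0 ≤ f i) (hsum : ∑ i, f i = 1) {u : ℝ}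
    (h0 : 0 ≤ u) (h1 : u < 1) :
    ∃ i : Fin n, u ∈ Set.Ico (cumul f i) (cumul f ((i : ℕ) + 1)) := by
  classical
  have hP : ∃ k : ℕ, u < cumul f (k + 1) := by
    refine ⟨n - 1, ?_⟩
    have : n - 1 + 1 = n := Nat.succ_pred_eq_of_pos (n_pos n)
    rw [this, cumul_of_ge le_rfl, hsum]
    exact h1
  set k0 := Nat.find hP with hk0
  have hspec : u < cumul f (k0 + 1) := Nat.find_spec hP
  have hk0n : k0 < n := by
    by_contra hcon
    push_neg at hcon
    rcases Nat.exists_eq_add_of_le hcon with ⟨c, hc⟩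
    have h2 : cumul f n ≤ u := by
      rcases Nat.eq_zero_or_pos k0 with h | h
      · exfalso; have hn := n_pos n; omega
      · have := Nat.find_min hP (m := k0 - 1) (by omega)
        push_neg at this
        have hrw : k0 - 1 + 1 = k0 := by omega
        rw [hrw] at this
        calc cumul f n ≤ cumul f k0 := cumul_mono hf hcon
          _ ≤ u := this
    rw [cumul_of_ge le_rfl, hsum] at h2
    linarith
  refine ⟨⟨k0, hk0n⟩, ?_, hspec⟩
  rcases Nat.eq_zero_or_pos k0 with h | h
  · simp only [h, cumul_zero]
    exact h0
  · have := Nat.find_min hP (m := k0 - 1) (by omega)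
    push_neg at this
    have hrw : k0 - 1 + 1 = k0 := by omega
    rw [hrw] at this
    exact this

lemma invCDF_default {f : Fin n → ℝ} (hf : ∀ i, 0 ≤ f i) (hsum : ∑ i, f i = 1) {u : ℝ}
    (h : u < 0 ∨ 1 ≤ u) : invCDF f u = ⟨0, n_pos n⟩ := by
  rw [invCDF, dif_neg]
  rintro ⟨i, hi1, hi2⟩
  rcases h with h | h
  · exact absurd (le_trans (cumul_nonneg hf _) hi1) (not_le.mpr h)
  · have : cumul f ((i : ℕ) + 1) ≤ 1 := by
      have := cumul_mono hf (show (i : ℕ) + 1 ≤ n from i.2)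
      rwa [cumul_of_ge le_rfl, hsum] at this
    linarith

/-- The set of seeds mapping to `i` under inverse-CDF sampling. -/
def invEvent (f : Fin n → ℝ) (i : Fin n) : Set ℝ := {u | invCDF f u = i}

lemma invEvent_eq {f : Fin n → ℝ} (hf : ∀ i, 0 ≤ f i) (hsum : ∑ i, f i = 1) (i : Fin n) :
    invEvent f i = Set.Ico (cumul f i) (cumul f ((i : ℕ) + 1)) ∪
      (if i = (⟨0, n_pos n⟩ : Fin n) then (Set.Ico (0:ℝ) 1)ᶜ else ∅) := by
  have hsub : Set.Ico (cumul f i) (cumul f ((i : ℕ) + 1)) ⊆ Set.Ico (0:ℝ) 1 := by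
    intro u hu
    have hc1 : cumul f ((i : ℕ) + 1) ≤ 1 := by
      have := cumul_mono hf (show (i : ℕ) + 1 ≤ n from i.2)
      rwa [cumul_of_ge le_rfl, hsum] at this
    exact ⟨le_trans (cumul_nonneg hf _) hu.1, lt_of_lt_of_le hu.2 hc1⟩
  ext u
  by_cases hu : u ∈ Set.Ico (0:ℝ) 1
  · simp only [invEvent, Set.mem_setOf_eq, Set.mem_union]
    have hnotdef : u ∉ (if i = (⟨0, n_pos n⟩ : Fin n) then (Set.Ico (0:ℝ) 1)ᶜ else ∅) := by
      split_ifs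
      · simp only [Set.mem_compl_iff, not_not]; exact hu
      · exact Set.notMem_empty u
    constructor
    · intro hinv
      left
      obtain ⟨j, hj⟩ := invCDF_exists hf hsum hu.1 hu.2
      rw [invCDF_eq hf hj] at hinv
      rwa [hinv] at hj
    · rintro (hmem | hmem)
      · exact invCDF_eq hf hmem
      · exact absurd hmem hnotdef
  · simp only [invEvent, Set.mem_setOf_eq, Set.mem_union]
    have hdef : invCDF f u = ⟨0, n_pos n⟩ := by
      apply invCDF_default hf hsum
      simp only [Set.mem_Ico, not_and_or, not_le, not_lt] at hu
      tauto
    have hnotico : u ∉ Set.Ico (cumul f i) (cumul f ((i : ℕ) + 1)) := fun hc => hu (hsub hc)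
    rw [hdef]
    constructor
    · intro heq
      right
      rw [if_pos heq.symm]
      exact hu
    · rintro (hmem | hmem)
      · exact absurd hmem hnotico
      · by_cases hi : i = (⟨0, n_pos n⟩ : Fin n)
        · exact hi.symm
        · rw [if_neg hi] at hmem
          exact absurd hmem (Set.notMem_empty u)

lemma measurableSet_invEvent {f : Fin n → ℝ} (hf : ∀ i, 0 ≤ f i) (hsum : ∑ i, f i = 1)
    (i : Fin n) : MeasurableSet (invEvent f i) := by
  rw [invEvent_eq hf hsum]
  apply MeasurableSet.union measurableSet_Ico
  split_ifs
  · exact measurableSet_Ico.compl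
  · exact MeasurableSet.empty

lemma μU_invEvent {f : Fin n → ℝ} (hf : ∀ i, 0 ≤ f i) (hsum : ∑ i, f i = 1) (i : Fin n) :
    μU (invEvent f i) = ENNReal.ofReal (f i) := by
  have hc1 : cumul f ((i : ℕ) + 1) ≤ 1 := by
    have := cumul_mono hf (show (i : ℕ) + 1 ≤ n from i.2)
    rwa [cumul_of_ge le_rfl, hsum] at this
  have hstep : cumul f ((i : ℕ) + 1) = cumul f (i : ℕ) + f i := by
    rw [cumul_succ i.2]
  have hico : μU (Set.Ico (cumul f i) (cumul f ((i : ℕ) + 1)))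
      = ENNReal.ofReal (f i) := by
    rw [μU_Ico (cumul_nonneg hf _) (by rw [hstep]; linarith [hf i]) hc1]
    rw [hstep]
    ring_nf
  have hzero : μU ((if i = (⟨0, n_pos n⟩ : Fin n) then (Set.Ico (0:ℝ) 1)ᶜ else ∅) : Set ℝ)
      = 0 := by
    split_ifs
    · rw [μU, Measure.restrict_apply measurableSet_Ico.compl]
      rw [Set.compl_inter_self]
      exact measure_empty
    · exact measure_empty
  rw [invEvent_eq hf hsum, measure_union ?_ ?_, hico, hzero, add_zero]
  · apply Set.disjoint_left.mpr
    intro u hu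
    have : u ∈ Set.Ico (0:ℝ) 1 := by
      have hc : cumul f ((i : ℕ) + 1) ≤ 1 := hc1
      exact ⟨le_trans (cumul_nonneg hf _) hu.1, lt_of_lt_of_le hu.2 hc⟩
    split_ifs
    · simp only [Set.mem_compl_iff, not_not]
      exact this
    · exact Set.notMem_empty u
  · split_ifs
    · exact measurableSet_Ico.compl
    · exact MeasurableSet.empty

end InvCDF


section Alg

lemma TELE (x : ℝ) (K : ℕ) : ∑ k ∈ Finset.range K, x * (1 - x) ^ k = 1 - (1 - x) ^ K := by
  have h := Finset.sum_range_sub' (fun k => (1 - x) ^ k) K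
  simp only [pow_zero] at h
  rw [← h]
  apply Finset.sum_congr rfl
  intro k _
  rw [pow_succ]
  ring

lemma PRODIF {K : ℕ} (a b : ℝ≥0∞) (k : Fin K) :
    (∏ j : Fin K, if j < k then a else if j = k then b else 1) = a ^ (k : ℕ) * b := by
  have hfun : ∀ j : Fin K, (if j < k then a else if j = k then b else 1)
      = (fun m : ℕ => if m < (k : ℕ) then a else if m = (k : ℕ) then b else 1) (j : ℕ) := by
    intro j
    simp only [Fin.lt_def, Fin.ext_iff]
  rw [Finset.prod_congr rfl (fun j _ => hfun j)]
  rw [Fin.prod_univ_eq_prod_range (fun m : ℕ => if m < (k : ℕ) then a else if m = (k : ℕ) then b else 1) K]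
  have h1 : (k : ℕ) + 1 ≤ K := k.2
  rw [← Finset.prod_range_mul_prod_Ico _ h1]
  have h2 : ∏ m ∈ Finset.Ico ((k : ℕ) + 1) K,
      (if m < (k : ℕ) then a else if m = (k : ℕ) then b else 1) = 1 := by
    apply Finset.prod_eq_one
    intro m hm
    rw [Finset.mem_Ico] at hm
    rw [if_neg (by omega), if_neg (by omega)]
  rw [h2, mul_one, Finset.prod_range_succ, if_neg (lt_irrefl _), if_pos rfl]
  congr 1
  rw [Finset.prod_congr rfl (fun m hm => if_pos (Finset.mem_range.mp hm)), Finset.prod_const,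
    Finset.card_range]

lemma min'_eq_of {α : Type*} [LinearOrder α] (s : Finset α) (k : α) (hk : k ∈ s)
    (hmin : ∀ j ∈ s, k ≤ j) (h : s.Nonempty) : s.min' h = k :=
  le_antisymm (Finset.min'_le s k hk) (Finset.le_min' s h k hmin)

variable {n K : ℕ} [NeZero n]

/-- Rounds at which `f` accepts. -/
def Jset (f : Fin n → ℝ) (r : Seed n K) : Finset (Fin K) :=
  Finset.univ.filter (fun k => (r.1 k).2 < f ((r.1 k).1))

/-- The atom index output by the sampling algorithm with level function `f`. -/
def outFn (f : Fin n → ℝ) (r : Seed n K) : Fin n :=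
  if h : (Jset f r).Nonempty then (r.1 ((Jset f r).min' h)).1 else invCDF f r.2

lemma outFn_of_first {f : Fin n → ℝ} {r : Seed n K} {k : Fin K}
    (hk : (r.1 k).2 < f ((r.1 k).1))
    (hmin : ∀ j, j < k → ¬((r.1 j).2 < f ((r.1 j).1))) :
    outFn f r = (r.1 k).1 := by
  have hkmem : k ∈ Jset f r := by
    simp only [Jset, Finset.mem_filter, Finset.mem_univ, true_and]; exact hk
  have hne : (Jset f r).Nonempty := ⟨k, hkmem⟩
  have hmin' : (Jset f r).min' hne = k := by
    apply min'_eq_of _ _ hkmem _ hne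
    intro j hj
    by_contra hcon
    push_neg at hcon
    apply hmin j hcon
    simpa [Jset] using hj
  rw [outFn, dif_pos hne, hmin']

lemma outFn_of_none {f : Fin n → ℝ} {r : Seed n K}
    (hnone : ∀ j, ¬((r.1 j).2 < f ((r.1 j).1))) :
    outFn f r = invCDF f r.2 := by
  rw [outFn, dif_neg]
  rintro ⟨j, hj⟩
  simp only [Jset, Finset.mem_filter, Finset.mem_univ, true_and] at hj
  exact hnone j hj

/-- First acceptance at round `k` on atom `i`. -/
def FkSet (f : Fin n → ℝ) (k : Fin K) (i : Fin n) : Set (Seed n K) :=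
  (Set.pi Set.univ (fun j => if j < k then (accSet f)ᶜ
    else if j = k then ({i} ×ˢ Set.Iio (f i)) else Set.univ)) ×ˢ (Set.univ : Set ℝ)

/-- No acceptance, fallback gives `i`. -/
def FinfSet (f : Fin n → ℝ) (i : Fin n) : Set (Seed n K) :=
  (Set.pi Set.univ (fun _ : Fin K => (accSet f)ᶜ)) ×ˢ invEvent f i

lemma mem_FkSet {f : Fin n → ℝ} {k : Fin K} {i : Fin n} {r : Seed n K} :
    r ∈ FkSet f k i ↔ (∀ j, j < k → ¬((r.1 j).2 < f ((r.1 j).1))) ∧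
      (r.1 k).2 < f ((r.1 k).1) ∧ (r.1 k).1 = i := by
  simp only [FkSet, Set.mem_prod, Set.mem_univ, and_true, Set.mem_pi, true_implies]
  constructor
  · intro h
    have hk := h k
    rw [if_neg (lt_irrefl _), if_pos rfl] at hk
    obtain ⟨hk1, hk2⟩ := hk
    refine ⟨?_, ?_, hk1⟩
    · intro j hj
      have := h j
      rw [if_pos hj] at this
      exact this
    · rw [hk1]; exact hk2
  · rintro ⟨h1, h2, h3⟩ j
    by_cases hj : j < k
    · rw [if_pos hj]; exact h1 j hj
    · by_cases hj2 : j = k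
      · subst hj2
        rw [if_neg hj, if_pos rfl]
        exact ⟨h3, by rw [← h3]; exact h2⟩
      · rw [if_neg hj, if_neg hj2]; trivial

lemma mem_FinfSet {f : Fin n → ℝ} {i : Fin n} {r : Seed n K} :
    r ∈ FinfSet f i ↔ (∀ j, ¬((r.1 j).2 < f ((r.1 j).1))) ∧ invCDF f r.2 = i := by
  simp only [FinfSet, Set.mem_prod, Set.mem_pi, Set.mem_univ, true_implies,
    Set.mem_compl_iff, invEvent, Set.mem_setOf_eq]
  rfl

lemma out_partition (f : Fin n → ℝ) (i : Fin n) :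
    {r : Seed n K | outFn f r = i} = (⋃ k, FkSet f k i) ∪ FinfSet f i := by
  ext r
  simp only [Set.mem_setOf_eq, Set.mem_union, Set.mem_iUnion]
  constructor
  · intro hout
    by_cases hne : (Jset f r).Nonempty
    · left
      set k := (Jset f r).min' hne with hkdef
      have hkmem : k ∈ Jset f r := Finset.min'_mem _ _
      simp only [Jset, Finset.mem_filter, Finset.mem_univ, true_and] at hkmem
      have hmin : ∀ j, j < k → ¬((r.1 j).2 < f ((r.1 j).1)) := by
        intro j hj hacc
        have hjmem : j ∈ Jset f r := by
          simp only [Jset, Finset.mem_filter, Finset.mem_univ, true_and]; exact hacc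
        have := Finset.min'_le _ _ hjmem
        rw [← hkdef] at this
        exact absurd hj (not_lt.mpr this)
      refine ⟨k, mem_FkSet.mpr ⟨hmin, hkmem, ?_⟩⟩
      rw [← hout, outFn, dif_pos hne]
    · right
      have hnone : ∀ j, ¬((r.1 j).2 < f ((r.1 j).1)) := by
        intro j hacc
        exact hne ⟨j, by simp only [Jset, Finset.mem_filter, Finset.mem_univ, true_and]; exact hacc⟩
      exact mem_FinfSet.mpr ⟨hnone, by rw [← outFn_of_none hnone]; exact hout⟩
  · rintro (⟨k, hk⟩ | hinf)
    · rw [mem_FkSet] at hk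
      rw [outFn_of_first hk.2.1 hk.1]
      exact hk.2.2
    · rw [mem_FinfSet] at hinf
      rw [outFn_of_none hinf.1]
      exact hinf.2

lemma measurableSet_FkSet (f : Fin n → ℝ) (k : Fin K) (i : Fin n) :
    MeasurableSet (FkSet f k i) := by
  apply MeasurableSet.prod ?_ MeasurableSet.univ
  apply MeasurableSet.pi (Set.to_countable _)
  intro j _
  split_ifs
  · exact (measurableSet_accSet f).compl
  · exact (measurableSet_singleton i).prod measurableSet_Iio
  · exact MeasurableSet.univ

lemma measurableSet_FinfSet {f : Fin n → ℝ} (hf : ∀ i, 0 ≤ f i) (hsum : ∑ i, f i = 1)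
    (i : Fin n) : MeasurableSet (FinfSet (K := K) f i) := by
  exact MeasurableSet.prod
    (MeasurableSet.pi (Set.to_countable _) (fun j _ => (measurableSet_accSet f).compl))
    (measurableSet_invEvent hf hsum i)

lemma seedM_rect (t : Fin K → Set (Fin n × ℝ)) (u : Set ℝ) :
    seedM n K ((Set.pi Set.univ t) ×ˢ u) = (∏ j, wR n (t j)) * μU u := by
  rw [seedM, Measure.prod_prod, Measure.pi_pi]

lemma wR_accSet_compl {f : Fin n → ℝ} (hf : ∀ i, 0 ≤ f i ∧ f i ≤ 1) :
    wR n (accSet f)ᶜ = ENNReal.ofReal (1 - (∑ i, f i) / n) := by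
  rw [prob_compl_eq_one_sub (measurableSet_accSet f), wR_accSet hf]
  rw [← ENNReal.ofReal_one, ← ENNReal.ofReal_sub]
  exact div_nonneg (Finset.sum_nonneg (fun i _ => (hf i).1)) (by positivity)

lemma seedM_FkSet {f : Fin n → ℝ} (hf : ∀ i, 0 ≤ f i ∧ f i ≤ 1) (hsum : ∑ i, f i = 1)
    (k : Fin K) (i : Fin n) :
    seedM n K (FkSet f k i) = ENNReal.ofReal ((1 - 1/(n:ℝ)) ^ (k : ℕ) * (f i / n)) := by
  have hn1 : (1:ℝ)/n ≤ 1 := by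
    rw [div_le_one (by exact_mod_cast n_pos n)]
    exact_mod_cast n_pos n
  rw [FkSet, seedM_rect, measure_univ, mul_one]
  have heach : ∀ j : Fin K, wR n (if j < k then (accSet f)ᶜ
      else if j = k then ({i} ×ˢ Set.Iio (f i)) else Set.univ)
      = if j < k then ENNReal.ofReal (1 - 1/(n:ℝ)) else if j = k then ENNReal.ofReal (f i / n) else 1 := by
    intro j
    split_ifs
    · rw [wR_accSet_compl hf, hsum]
    · rw [wR, Measure.prod_prod, νC_singleton, μU_Iio (hf i).1 (hf i).2]
      rw [div_eq_mul_inv, ENNReal.ofReal_mul (hf i).1, mul_comm]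
      congr 1
      rw [← ENNReal.ofReal_natCast n, ← ENNReal.ofReal_inv_of_pos (by exact_mod_cast n_pos n)]
    · exact measure_univ
  rw [Finset.prod_congr rfl (fun j _ => heach j), PRODIF]
  rw [← ENNReal.ofReal_pow (by linarith), ← ENNReal.ofReal_mul (pow_nonneg (by linarith) _)]

lemma seedM_FinfSet {f : Fin n → ℝ} (hf : ∀ i, 0 ≤ f i ∧ f i ≤ 1) (hsum : ∑ i, f i = 1)
    (i : Fin n) :
    seedM n K (FinfSet f i) = ENNReal.ofReal ((1 - 1/(n:ℝ)) ^ K * f i) := by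
  have hn1 : (1:ℝ)/n ≤ 1 := by
    rw [div_le_one (by exact_mod_cast n_pos n)]
    exact_mod_cast n_pos n
  rw [FinfSet, seedM_rect, μU_invEvent (fun i => (hf i).1) hsum]
  rw [Finset.prod_congr rfl (fun j _ => wR_accSet_compl hf), hsum, Finset.prod_const,
    Finset.card_univ, Fintype.card_fin]
  rw [← ENNReal.ofReal_pow (by linarith), ← ENNReal.ofReal_mul (pow_nonneg (by linarith) _)]

lemma FkSet_disjoint (f : Fin n → ℝ) (i : Fin n) :
    Pairwise (Function.onFun Disjoint fun k : Fin K => FkSet f k i) := by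
  have haux : ∀ k k' : Fin K, k < k' → Disjoint (FkSet f k i) (FkSet f k' i) := by
    intro k k' hkk'
    rw [Set.disjoint_left]
    intro r hr hr'
    rw [mem_FkSet] at hr hr'
    exact hr'.1 k hkk' hr.2.1
  intro k k' hne
  rcases lt_or_gt_of_ne hne with h | h
  · exact haux k k' h
  · exact (haux k' k h).symm

lemma FinfSet_disjoint (f : Fin n → ℝ) (i : Fin n) :
    Disjoint (⋃ k : Fin K, FkSet f k i) (FinfSet f i) := by
  rw [Set.disjoint_left]
  intro r hr hr'
  simp only [Set.mem_iUnion] at hr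
  obtain ⟨k, hk⟩ := hr
  rw [mem_FkSet] at hk
  rw [mem_FinfSet] at hr'
  exact hr'.1 k hk.2.1

/-- Exactness: the output distribution of the sampler is `f`. -/
lemma seedM_out {f : Fin n → ℝ} (hf : ∀ i, 0 ≤ f i ∧ f i ≤ 1) (hsum : ∑ i, f i = 1)
    (i : Fin n) :
    seedM n K {r : Seed n K | outFn f r = i} = ENNReal.ofReal (f i) := by
  have hn1 : (1:ℝ)/n ≤ 1 := by
    rw [div_le_one (by exact_mod_cast n_pos n)]
    exact_mod_cast n_pos n
  rw [out_partition f i]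
  rw [measure_union (FinfSet_disjoint f i) (measurableSet_FinfSet (fun i => (hf i).1) hsum i)]
  rw [measure_iUnion (FkSet_disjoint f i) (fun k => measurableSet_FkSet f k i)]
  rw [tsum_fintype]
  rw [Finset.sum_congr rfl (fun k _ => seedM_FkSet hf hsum k i), seedM_FinfSet hf hsum i]
  have hterm : ∀ k : ℕ, 0 ≤ (1 - 1/(n:ℝ)) ^ k * (f i / n) := fun k =>
    mul_nonneg (pow_nonneg (by linarith) _) (div_nonneg (hf i).1 (by positivity))
  have hterm2 : (0:ℝ) ≤ (1 - 1/(n:ℝ)) ^ K * f i :=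
    mul_nonneg (pow_nonneg (by linarith) _) (hf i).1
  rw [Fin.sum_univ_eq_sum_range (fun k => ENNReal.ofReal ((1 - 1/(n:ℝ)) ^ k * (f i / n))) K]
  rw [← ENNReal.ofReal_sum_of_nonneg (fun k _ => hterm k)]
  rw [← ENNReal.ofReal_add (Finset.sum_nonneg (fun k _ => hterm k)) hterm2]
  congr 1
  have h1 : ∑ k ∈ Finset.range K, (1 - 1/(n:ℝ)) ^ k * (f i / n)
      = (∑ k ∈ Finset.range K, (1/(n:ℝ)) * (1 - 1/(n:ℝ)) ^ k) * f i := by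
    rw [Finset.sum_mul]
    apply Finset.sum_congr rfl
    intro k _
    ring
  rw [h1, TELE]
  ring

end Alg


section Disagree
variable {n K : ℕ} [NeZero n]

/-- Event: first "either-accepts" round is `k`, and it is not a joint acceptance. -/
def GkSet (p q : Fin n → ℝ) (k : Fin K) : Set (Seed n K) :=
  (Set.pi Set.univ (fun j => if j < k then (accSet (fun i => max (p i) (q i)))ᶜ
    else if j = k then accSet (fun i => max (p i) (q i)) \ accSet (fun i => min (p i) (q i))
    else Set.univ)) ×ˢ (Set.univ : Set ℝ)

/-- Event: no round is an "either-accepts" round. -/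
def GinfSet (p q : Fin n → ℝ) : Set (Seed n K) :=
  (Set.pi Set.univ (fun _ : Fin K => (accSet (fun i => max (p i) (q i)))ᶜ)) ×ˢ (Set.univ : Set ℝ)

lemma disagree_subset (p q : Fin n → ℝ) :
    {r : Seed n K | outFn p r ≠ outFn q r} ⊆ (⋃ k, GkSet p q k) ∪ GinfSet p q := by
  intro r hr
  simp only [Set.mem_setOf_eq] at hr
  by_contra hnot
  simp only [Set.mem_union, Set.mem_iUnion, not_or, not_exists] at hnot
  obtain ⟨hU, hI⟩ := hnot
  have hex : ∃ j : Fin K, (r.1 j).2 < max (p ((r.1 j).1)) (q ((r.1 j).1)) := by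
    by_contra hcon
    push_neg at hcon
    apply hI
    simp only [GinfSet, Set.mem_prod, Set.mem_univ, and_true, Set.mem_pi, true_implies,
      Set.mem_compl_iff, accSet, Set.mem_setOf_eq]
    exact fun j => not_lt.mpr (hcon j)
  set s := Finset.univ.filter
    (fun j : Fin K => (r.1 j).2 < max (p ((r.1 j).1)) (q ((r.1 j).1))) with hsdef
  have hsne : s.Nonempty := by
    obtain ⟨j, hj⟩ := hex
    exact ⟨j, by simp only [hsdef, Finset.mem_filter, Finset.mem_univ, true_and]; exact hj⟩
  set k := s.min' hsne with hkdef
  have hkmem : k ∈ s := Finset.min'_mem _ _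
  simp only [hsdef, Finset.mem_filter, Finset.mem_univ, true_and] at hkmem
  have hlt : ∀ j, j < k → ¬((r.1 j).2 < max (p ((r.1 j).1)) (q ((r.1 j).1))) := by
    intro j hj hacc
    have hjmem : j ∈ s := by
      simp only [hsdef, Finset.mem_filter, Finset.mem_univ, true_and]; exact hacc
    exact absurd hj (not_lt.mpr (by rw [hkdef]; exact Finset.min'_le _ _ hjmem))
  have hjoint : (r.1 k).2 < min (p ((r.1 k).1)) (q ((r.1 k).1)) := by
    by_contra hcon
    apply hU k
    simp only [GkSet, Set.mem_prod, Set.mem_univ, and_true, Set.mem_pi, true_implies]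
    intro j
    by_cases hj : j < k
    · rw [if_pos hj]
      exact fun hc => (hlt j hj) hc
    · by_cases hj2 : j = k
      · subst hj2
        rw [if_neg hj, if_pos rfl]
        exact ⟨hkmem, fun hc => hcon hc⟩
      · rw [if_neg hj, if_neg hj2]; trivial
  have hp1 : outFn p r = (r.1 k).1 := by
    apply outFn_of_first (lt_of_lt_of_le hjoint (min_le_left _ _))
    intro j hj hacc
    exact hlt j hj (lt_of_lt_of_le hacc (le_max_left _ _))
  have hq1 : outFn q r = (r.1 k).1 := by
    apply outFn_of_first (lt_of_lt_of_le hjoint (min_le_right _ _))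
    intro j hj hacc
    exact hlt j hj (lt_of_lt_of_le hacc (le_max_right _ _))
  exact hr (hp1.trans hq1.symm)

lemma seedM_GkSet {p q : Fin n → ℝ} (hp : ∀ i, 0 ≤ p i ∧ p i ≤ 1)
    (hq : ∀ i, 0 ≤ q i ∧ q i ≤ 1) (k : Fin K) :
    seedM n K (GkSet p q k) = ENNReal.ofReal
      ((1 - (∑ i, max (p i) (q i)) / n) ^ (k : ℕ)
        * ((∑ i, max (p i) (q i)) / n - (∑ i, min (p i) (q i)) / n)) := by
  have hmaxb : ∀ i, 0 ≤ max (p i) (q i) ∧ max (p i) (q i) ≤ 1 := fun i =>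
    ⟨le_trans (hp i).1 (le_max_left _ _), max_le (hp i).2 (hq i).2⟩
  have hminb : ∀ i, 0 ≤ min (p i) (q i) ∧ min (p i) (q i) ≤ 1 := fun i =>
    ⟨le_min (hp i).1 (hq i).1, le_trans (min_le_left _ _) (hp i).2⟩
  have hγ1 : (∑ i, max (p i) (q i)) / (n:ℝ) ≤ 1 := by
    rw [div_le_one (by exact_mod_cast n_pos n)]
    calc ∑ i, max (p i) (q i) ≤ ∑ _i : Fin n, (1:ℝ) :=
          Finset.sum_le_sum (fun i _ => (hmaxb i).2)
      _ = n := by simp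
  have hαγ : (∑ i, min (p i) (q i)) / (n:ℝ) ≤ (∑ i, max (p i) (q i)) / (n:ℝ) := by
    gcongr with i
    exact min_le_max
  have hα0 : 0 ≤ (∑ i, min (p i) (q i)) / (n:ℝ) :=
    div_nonneg (Finset.sum_nonneg fun i _ => (hminb i).1) (by positivity)
  have hdiff : wR n (accSet (fun i => max (p i) (q i)) \ accSet (fun i => min (p i) (q i)))
      = ENNReal.ofReal ((∑ i, max (p i) (q i)) / n - (∑ i, min (p i) (q i)) / n) := by
    rw [measure_diff ?_ ((measurableSet_accSet _).nullMeasurableSet) (measure_ne_top _ _)]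
    · rw [wR_accSet hmaxb, wR_accSet hminb, ← ENNReal.ofReal_sub _ hα0]
    · intro x hx
      simp only [accSet, Set.mem_setOf_eq] at hx ⊢
      exact lt_of_lt_of_le hx (min_le_max)
  rw [GkSet, seedM_rect, measure_univ, mul_one]
  have heach : ∀ j : Fin K, wR n (if j < k then (accSet (fun i => max (p i) (q i)))ᶜ
      else if j = k then accSet (fun i => max (p i) (q i)) \ accSet (fun i => min (p i) (q i))
      else Set.univ)
      = if j < k then ENNReal.ofReal (1 - (∑ i, max (p i) (q i)) / n)
        else if j = k then ENNReal.ofReal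
          ((∑ i, max (p i) (q i)) / n - (∑ i, min (p i) (q i)) / n) else 1 := by
    intro j
    split_ifs
    · exact wR_accSet_compl hmaxb
    · exact hdiff
    · exact measure_univ
  rw [Finset.prod_congr rfl (fun j _ => heach j), PRODIF]
  rw [← ENNReal.ofReal_pow (by linarith), ← ENNReal.ofReal_mul (pow_nonneg (by linarith) _)]

lemma seedM_GinfSet {p q : Fin n → ℝ} (hp : ∀ i, 0 ≤ p i ∧ p i ≤ 1)
    (hq : ∀ i, 0 ≤ q i ∧ q i ≤ 1) :
    seedM n K (GinfSet p q) = ENNReal.ofReal ((1 - (∑ i, max (p i) (q i)) / n) ^ K) := by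
  have hmaxb : ∀ i, 0 ≤ max (p i) (q i) ∧ max (p i) (q i) ≤ 1 := fun i =>
    ⟨le_trans (hp i).1 (le_max_left _ _), max_le (hp i).2 (hq i).2⟩
  have hγ1 : (∑ i, max (p i) (q i)) / (n:ℝ) ≤ 1 := by
    rw [div_le_one (by exact_mod_cast n_pos n)]
    calc ∑ i, max (p i) (q i) ≤ ∑ _i : Fin n, (1:ℝ) :=
          Finset.sum_le_sum (fun i _ => (hmaxb i).2)
      _ = n := by simp
  rw [GinfSet, seedM_rect, measure_univ, mul_one]
  rw [Finset.prod_congr rfl (fun j _ => wR_accSet_compl hmaxb), Finset.prod_const,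
    Finset.card_univ, Fintype.card_fin]
  rw [← ENNReal.ofReal_pow (by linarith)]

/-- The correlated-sampling disagreement bound. -/
lemma disagree_bound {p q : Fin n → ℝ} (hp : ∀ i, 0 ≤ p i ∧ p i ≤ 1)
    (hq : ∀ i, 0 ≤ q i ∧ q i ≤ 1) (hps : ∑ i, p i = 1) (hqs : ∑ i, q i = 1) :
    seedM n K {r : Seed n K | outFn p r ≠ outFn q r}
      ≤ ENNReal.ofReal ((∑ i, |p i - q i|) + (1 - 1/(n:ℝ)) ^ K) := by
  set γ := (∑ i, max (p i) (q i)) / (n:ℝ) with hγdef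
  set α := (∑ i, min (p i) (q i)) / (n:ℝ) with hαdef
  have hnR : (0:ℝ) < n := by exact_mod_cast n_pos n
  have hmaxb : ∀ i, 0 ≤ max (p i) (q i) ∧ max (p i) (q i) ≤ 1 := fun i =>
    ⟨le_trans (hp i).1 (le_max_left _ _), max_le (hp i).2 (hq i).2⟩
  have hγ1 : γ ≤ 1 := by
    rw [hγdef, div_le_one hnR]
    calc ∑ i, max (p i) (q i) ≤ ∑ _i : Fin n, (1:ℝ) :=
          Finset.sum_le_sum (fun i _ => (hmaxb i).2)
      _ = n := by simp
  have hγn : 1/(n:ℝ) ≤ γ := by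
    rw [hγdef, div_le_div_iff_of_pos_right hnR]
    calc (1:ℝ) = ∑ i, p i := hps.symm
      _ ≤ ∑ i, max (p i) (q i) := Finset.sum_le_sum (fun i _ => le_max_left _ _)
  have hαγ : α ≤ γ := by
    rw [hγdef, hαdef]
    gcongr with i
    exact min_le_max
  have hγα : (0:ℝ) ≤ γ - α := by linarith
  have hγ0 : (0:ℝ) ≤ 1 - γ := by linarith
  have habs : (n:ℝ) * (γ - α) = ∑ i, |p i - q i| := by
    have h1 : (n:ℝ) * (γ - α) = (∑ i, max (p i) (q i)) - (∑ i, min (p i) (q i)) := by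
      rw [hγdef, hαdef]
      field_simp
    rw [h1, ← Finset.sum_sub_distrib]
    exact Finset.sum_congr rfl (fun i _ => by rw [max_sub_min_eq_abs, abs_sub_comm])
  have hnγ : 1 ≤ γ * (n:ℝ) := (div_le_iff₀ hnR).mp hγn
  have REALBOUND : ∑ k ∈ Finset.range K, (1-γ)^k * (γ-α) ≤ ∑ i, |p i - q i| := by
    have h1 : ∀ k ∈ Finset.range K, (1-γ)^k * (γ-α) ≤ (γ*(1-γ)^k) * ((n:ℝ)*(γ-α)) := by
      intro k _
      have hpow : (0:ℝ) ≤ (1-γ)^k := pow_nonneg hγ0 k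
      have hkey : (γ - α) ≤ γ * ((n:ℝ)*(γ-α)) := by
        nlinarith [mul_nonneg hγα (by linarith : (0:ℝ) ≤ γ * (n:ℝ) - 1)]
      calc (1-γ)^k * (γ-α) ≤ (1-γ)^k * (γ * ((n:ℝ)*(γ-α))) :=
            mul_le_mul_of_nonneg_left hkey hpow
        _ = (γ*(1-γ)^k) * ((n:ℝ)*(γ-α)) := by ring
    calc ∑ k ∈ Finset.range K, (1-γ)^k * (γ-α)
        ≤ ∑ k ∈ Finset.range K, (γ*(1-γ)^k) * ((n:ℝ)*(γ-α)) := Finset.sum_le_sum h1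
      _ = (∑ k ∈ Finset.range K, γ*(1-γ)^k) * ((n:ℝ)*(γ-α)) := (Finset.sum_mul _ _ _).symm
      _ = (1 - (1-γ)^K) * ((n:ℝ)*(γ-α)) := by rw [TELE]
      _ ≤ 1 * ((n:ℝ)*(γ-α)) := by
          apply mul_le_mul_of_nonneg_right ?_ (by nlinarith)
          nlinarith [pow_nonneg hγ0 K]
      _ = (n:ℝ)*(γ-α) := one_mul _
      _ = ∑ i, |p i - q i| := habs
  have POWBOUND : (1-γ)^K ≤ (1 - 1/(n:ℝ))^K := by
    apply pow_le_pow_left₀ hγ0 (by linarith)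
  calc seedM n K {r : Seed n K | outFn p r ≠ outFn q r}
      ≤ seedM n K ((⋃ k, GkSet p q k) ∪ GinfSet p q) := measure_mono (disagree_subset p q)
    _ ≤ seedM n K (⋃ k, GkSet p q k) + seedM n K (GinfSet p q) := measure_union_le _ _
    _ ≤ (∑ k : Fin K, seedM n K (GkSet p q k)) + seedM n K (GinfSet p q) := by
        apply add_le_add_left
        have := measure_iUnion_le (μ := seedM n K) (fun k : Fin K => GkSet p q k)
        rwa [tsum_fintype] at this
    _ = (∑ k : Fin K, ENNReal.ofReal ((1-γ)^(k:ℕ) * (γ-α))) + ENNReal.ofReal ((1-γ)^K) := by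
        rw [Finset.sum_congr rfl (fun k _ => seedM_GkSet hp hq k), seedM_GinfSet hp hq]
    _ = ENNReal.ofReal ((∑ k ∈ Finset.range K, (1-γ)^k * (γ-α)) + (1-γ)^K) := by
        rw [Fin.sum_univ_eq_sum_range (fun k => ENNReal.ofReal ((1-γ)^k * (γ-α))) K]
        rw [← ENNReal.ofReal_sum_of_nonneg
          (fun k _ => mul_nonneg (pow_nonneg hγ0 k) hγα)]
        rw [← ENNReal.ofReal_add
          (Finset.sum_nonneg (fun k _ => mul_nonneg (pow_nonneg hγ0 k) hγα))
          (pow_nonneg hγ0 K)]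
    _ ≤ ENNReal.ofReal ((∑ i, |p i - q i|) + (1 - 1/(n:ℝ)) ^ K) := by
        apply ENNReal.ofReal_le_ofReal
        exact add_le_add REALBOUND POWBOUND

end Disagree


section OutMeas
variable {n K : ℕ} [NeZero n]

lemma measurableSet_outEq {f : Fin n → ℝ} (hf : ∀ i, 0 ≤ f i) (hsum : ∑ i, f i = 1)
    (i : Fin n) : MeasurableSet {r : Seed n K | outFn f r = i} := by
  rw [out_partition]
  exact (MeasurableSet.iUnion (fun k => measurableSet_FkSet f k i)).union
    (measurableSet_FinfSet hf hsum i)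

end OutMeas

/-- `exp ε - 1 ≤ 2 ε` on `[0,1]`. -/
lemma exp_sub_one_le {ε : ℝ} (h0 : 0 ≤ ε) (h1 : ε ≤ 1) : Real.exp ε - 1 ≤ 2 * ε := by
  have hb := Real.exp_bound (x := ε) (by rw [abs_of_nonneg h0]; exact h1) (n := 1) one_pos
  norm_num [Nat.factorial] at hb
  rw [abs_of_nonneg h0] at hb
  have := le_abs_self (Real.exp ε - 1)
  linarith

/-- Inner-regularity style bound: a measurable subset of the complement of a
set of outer measure `≥ 1 - β` has measure at most `β`. -/
lemma inner_bound {α : Type*} [MeasurableSpace α] {μ : Measure α} [IsProbabilityMeasure μ]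
    {G V : Set α} {β : ℝ} (hG : 1 - β ≤ (μ G).toReal) (hV : MeasurableSet V)
    (hVG : V ∩ G = ∅) : μ V ≤ ENNReal.ofReal β := by
  have hsub : G ⊆ Vᶜ := by
    intro x hx
    intro hxV
    exact Set.eq_empty_iff_forall_notMem.mp hVG x ⟨hxV, hx⟩
  have h1 : μ V + μ G ≤ 1 := by
    calc μ V + μ G ≤ μ V + μ Vᶜ := by
          exact add_le_add_right (measure_mono hsub) _
      _ = 1 := by rw [measure_add_measure_compl hV, measure_univ]
  have h2 : (μ V).toReal + (μ G).toReal ≤ 1 := by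
    rw [← ENNReal.toReal_add (measure_ne_top _ _) (measure_ne_top _ _)]
    calc ((μ V) + (μ G)).toReal ≤ (1 : ℝ≥0∞).toReal := by
          apply ENNReal.toReal_mono (by simp) h1
      _ = 1 := by simp
  have h3 : (μ V).toReal ≤ β := by linarith
  calc μ V = ENNReal.ofReal ((μ V).toReal) := (ENNReal.ofReal_toReal (measure_ne_top _ _)).symm
    _ ≤ ENNReal.ofReal β := ENNReal.ofReal_le_ofReal h3

/-- Pointwise bound giving a lintegral bound for `[0,1]`-valued functions. -/
lemma lintegral_le_of_bound {α : Type*} [MeasurableSpace α] {μ : Measure α}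
    [IsProbabilityMeasure μ] {g : α → ℝ≥0∞} (hg : Measurable g) (hg1 : ∀ x, g x ≤ 1)
    (c : ℝ≥0∞) : ∫⁻ x, g x ∂μ ≤ c + μ {x | c < g x} := by
  have hU : MeasurableSet {x | c < g x} := hg measurableSet_Ioi
  have hpt : ∀ x, g x ≤ c + ({x | c < g x}).indicator (fun _ => 1) x := by
    intro x
    by_cases hx : x ∈ {x | c < g x}
    · rw [Set.indicator_of_mem hx]
      calc g x ≤ 1 := hg1 x
        _ ≤ c + 1 := le_add_self
    · rw [Set.indicator_of_notMem hx, add_zero]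
      exact not_lt.mp hx
  calc ∫⁻ x, g x ∂μ ≤ ∫⁻ x, (c + ({x | c < g x}).indicator (fun _ => 1) x) ∂μ :=
        lintegral_mono hpt
    _ = c + μ {x | c < g x} := by
        rw [lintegral_add_left measurable_const, lintegral_const, measure_univ, mul_one]
        congr 1
        exact lintegral_indicator_one hU

end OWPGAux


/-- A one-way perfectly generalizing algorithm with finite output space can be
implemented as a seed-based algorithm (with the same per-dataset output
distribution) that is `4(β + 2ε + δ)`-replicable. -/
theorem oneWayPG_implies_replicable {X Y : Type*} [MeasurableSpace X]
    [MeasurableSpace Y] [Finite Y]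
    {m : ℕ} (A : (Fin m → X) → Measure Y)
    (hA : ∀ S, IsProbabilityMeasure (A S))
    (β ε δ : ℝ)
    (hβ : 0 < β) (hβ1 : β < 1) (hε : 0 < ε) (hε1 : ε < 1) (hδ : 0 < δ) (hδ1 : δ < 1)
    (h : OneWayPG A β ε δ) :
    ∃ (R : Type) (_ : MeasurableSpace R) (ν : Measure R)
      (A' : (Fin m → X) → R → Y),
      IsProbabilityMeasure ν ∧
      (∀ S, Measurable (A' S)) ∧
      (∀ S : Fin m → X, ν.map (A' S) = A S) ∧
      IsReplicable m A' ν (4 * (β + 2 * ε + δ)) := by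
  classical
  rcases isEmpty_or_nonempty (Fin m → X) with hempty | hne
  · -- Vacuous case: no datasets exist, hence `X` is empty and there is no
    -- probability distribution over `X` either.
    haveI : IsEmpty X := by
      by_contra hX
      rw [not_isEmpty_iff] at hX
      exact hempty.false (fun _ => Classical.arbitrary X)
    refine ⟨Unit, inferInstance, Measure.dirac (), fun S _ => (hempty.false S).elim,
      inferInstance, fun S => (hempty.false S).elim, fun S => (hempty.false S).elim, ?_⟩
    intro D hD
    exfalso
    have h1 := hD.measure_univ
    rw [Set.univ_eq_empty_iff.mpr ‹IsEmpty X›, measure_empty] at h1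
    exact zero_ne_one h1
  · haveI : Fintype Y := Fintype.ofFinite Y
    obtain ⟨S₀⟩ := hne
    haveI := hA S₀
    rcases isEmpty_or_nonempty Y with hYempty | hYne
    · exfalso
      have h1 := (hA S₀).measure_univ
      rw [Set.univ_eq_empty_iff.mpr hYempty, measure_empty] at h1
      exact zero_ne_one h1
    haveI : NeZero (OWPGAux.nAtoms Y) := by
      constructor
      have hne2 : (OWPGAux.ATOMS Y).Nonempty :=
        ⟨OWPGAux.atomOf (Classical.arbitrary Y),
          Finset.mem_image_of_mem _ (Finset.mem_univ _)⟩
      exact hne2.card_pos.ne'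
    set n := OWPGAux.nAtoms Y with hndef
    have hnposR : (0:ℝ) < n := by exact_mod_cast OWPGAux.n_pos n
    have hq1 : 1 - 1/(n:ℝ) < 1 := by
      have : (0:ℝ) < 1/(n:ℝ) := by positivity
      linarith
    obtain ⟨K, hK⟩ := exists_pow_lt_of_lt_one hβ hq1
    set pick : Fin n → Y := fun i => (OWPGAux.At_nonempty i).some with hpickdef
    have hpick : ∀ i, pick i ∈ OWPGAux.At Y i := fun i => (OWPGAux.At_nonempty i).some_mem
    have hpickinj : ∀ i j, pick i = pick j → i = j := by
      intro i j hij
      by_contra hne2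
      have hd := OWPGAux.At_disjoint (Y := Y) hne2
      exact (Set.disjoint_left.mp hd (hpick i)) (hij ▸ hpick j)
    set pS : (Fin m → X) → Fin n → ℝ := fun S i => (A S (OWPGAux.At Y i)).toReal with hpSdef
    have htoReal_le_one : ∀ (μ : Measure Y), IsProbabilityMeasure μ → ∀ B : Set Y,
        (μ B).toReal ≤ 1 := by
      intro μ hμ B
      calc (μ B).toReal ≤ (1:ℝ≥0∞).toReal :=
            ENNReal.toReal_mono (by simp) prob_le_one
        _ = 1 := by simp
    have hpSb : ∀ S i, 0 ≤ pS S i ∧ pS S i ≤ 1 := fun S i =>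
      ⟨ENNReal.toReal_nonneg, htoReal_le_one (A S) (hA S) _⟩
    have hmeasSum : ∀ (μ : Measure Y), IsProbabilityMeasure μ → ∀ B : Set Y, MeasurableSet B →
        (μ B).toReal = ∑ i ∈ Finset.univ.filter (fun i => OWPGAux.At Y i ⊆ B),
          (μ (OWPGAux.At Y i)).toReal := by
      intro μ hμ B hB
      rw [OWPGAux.measure_eq_sum_At μ hB,
        ENNReal.toReal_sum (fun i _ => measure_ne_top _ _)]
    have hsumOne : ∀ (μ : Measure Y), IsProbabilityMeasure μ →
        ∑ i, (μ (OWPGAux.At Y i)).toReal = 1 := by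
      intro μ hμ
      have h1 := hmeasSum μ hμ Set.univ MeasurableSet.univ
      have hfil : Finset.univ.filter (fun i => OWPGAux.At Y i ⊆ (Set.univ : Set Y))
          = Finset.univ :=
        Finset.filter_true_of_mem (fun i _ => Set.subset_univ _)
      rw [hfil, measure_univ] at h1
      simpa using h1.symm
    have hpSsum : ∀ S, ∑ i, pS S i = 1 := fun S => hsumOne (A S) (hA S)
    -- the algorithm
    have hpre : ∀ (S : Fin m → X) (B : Set Y),
        (fun r : OWPGAux.Seed n K => pick (OWPGAux.outFn (pS S) r)) ⁻¹' B
        = ⋃ i ∈ Finset.univ.filter (fun i => pick i ∈ B),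
            {r : OWPGAux.Seed n K | OWPGAux.outFn (pS S) r = i} := by
      intro S B
      ext r
      simp only [Set.mem_preimage, Set.mem_iUnion, Finset.mem_filter, Finset.mem_univ, true_and,
        Set.mem_setOf_eq]
      constructor
      · intro hmem
        exact ⟨OWPGAux.outFn (pS S) r, hmem, rfl⟩
      · rintro ⟨i, hi, hri⟩
        rw [hri]; exact hi
    have hmeasA' : ∀ S, Measurable (fun r : OWPGAux.Seed n K => pick (OWPGAux.outFn (pS S) r)) := by
      intro S t ht
      rw [hpre S t]
      exact Finset.measurableSet_biUnion _
        (fun i _ => OWPGAux.measurableSet_outEq (fun i => (hpSb S i).1) (hpSsum S) i)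
    have houtdisj : ∀ S, Set.PairwiseDisjoint
        (↑(Finset.univ : Finset (Fin n)))
        (fun i => {r : OWPGAux.Seed n K | OWPGAux.outFn (pS S) r = i}) := by
      intro S i _ j _ hij
      rw [Function.onFun, Set.disjoint_left]
      intro r h1 h2
      simp only [Set.mem_setOf_eq] at h1 h2
      exact hij (h1.symm.trans h2)
    have hmap : ∀ S, (OWPGAux.seedM n K).map (fun r : OWPGAux.Seed n K => pick (OWPGAux.outFn (pS S) r)) = A S := by
      intro S
      apply Measure.ext
      intro B hB
      rw [Measure.map_apply (hmeasA' S) hB, hpre S B]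
      rw [measure_biUnion_finset
        ((houtdisj S).subset (by intro i hi; exact Finset.mem_coe.mpr (Finset.mem_univ i)))
        (fun i _ => OWPGAux.measurableSet_outEq (fun i => (hpSb S i).1) (hpSsum S) i)]
      have hfileq : Finset.univ.filter (fun i => pick i ∈ B)
          = Finset.univ.filter (fun i => OWPGAux.At Y i ⊆ B) := by
        apply Finset.filter_congr
        intro i _
        constructor
        · intro hmem
          exact OWPGAux.At_subset_iff_meets hB (hpick i) hmem
        · intro hsub
          exact hsub (hpick i)
      rw [Finset.sum_congr rfl (fun i _ => OWPGAux.seedM_out (hpSb S) (hpSsum S) i), hfileq]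
      rw [OWPGAux.measure_eq_sum_At (A S) hB]
      apply Finset.sum_congr rfl
      intro i _
      exact ENNReal.ofReal_toReal (measure_ne_top _ _)
    refine ⟨OWPGAux.Seed n K, inferInstance, OWPGAux.seedM n K,
      fun (S : Fin m → X) (r : OWPGAux.Seed n K) => pick (OWPGAux.outFn (pS S) r), inferInstance, hmeasA', hmap, ?_⟩
    -- Replicability
    intro D hD
    haveI : IsProbabilityMeasure (iidSample D m) := by rw [iidSample]; infer_instance
    obtain ⟨Sim, hSimP, hGood⟩ := h D hD
    set μm := iidSample D m with hμmdef
    set Good := {S : Fin m → X |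
      ∀ O : Set Y, (A S O).toReal ≤ Real.exp ε * (Sim O).toReal + δ} with hGoodDef
    set sV : Fin n → ℝ := fun i => (Sim (OWPGAux.At Y i)).toReal with hsVdef
    have hsVsum : ∑ i, sV i = 1 := hsumOne Sim hSimP
    have hexp1 : 1 ≤ Real.exp ε := Real.one_le_exp hε.le
    -- total-variation bound for good datasets
    have hgood_tv : ∀ S, S ∈ Good → ∑ i, |pS S i - sV i| ≤ 2 * ((Real.exp ε - 1) + δ) := by
      intro S hS
      haveI := hA S
      set P := Finset.univ.filter (fun i => sV i ≤ pS S i) with hPdef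
      set OP := ⋃ i ∈ P, OWPGAux.At Y i with hOPdef
      have hOPm : MeasurableSet OP :=
        Finset.measurableSet_biUnion _ (fun i _ => OWPGAux.measurableSet_At i)
      have hbiU : ∀ (μ : Measure Y), IsProbabilityMeasure μ →
          (μ OP).toReal = ∑ i ∈ P, (μ (OWPGAux.At Y i)).toReal := by
        intro μ hμ
        rw [hOPdef, measure_biUnion_finset ?_ (fun i _ => OWPGAux.measurableSet_At i),
          ENNReal.toReal_sum (fun i _ => measure_ne_top _ _)]
        intro i _ j _ hij
        exact OWPGAux.At_disjoint hij
      have ha := hbiU (A S) (hA S)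
      have hb := hbiU Sim hSimP
      have hgOP := hS OP
      have hbb : (Sim OP).toReal ≤ 1 := htoReal_le_one Sim hSimP OP
      have hb0 : 0 ≤ (Sim OP).toReal := ENNReal.toReal_nonneg
      have hkey : (∑ i ∈ P, pS S i) - (∑ i ∈ P, sV i) ≤ (Real.exp ε - 1) + δ := by
        rw [hpSdef, hsVdef]
        simp only
        rw [← ha, ← hb]
        nlinarith [hgOP, hbb, hb0]
      have hsplit : ∑ i, |pS S i - sV i|
          = (∑ i ∈ P, (pS S i - sV i))
            + (∑ i ∈ Finset.univ.filter (fun i => ¬ (sV i ≤ pS S i)), (sV i - pS S i)) := by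
        rw [← Finset.sum_filter_add_sum_filter_not Finset.univ (fun i => sV i ≤ pS S i)
          (fun i => |pS S i - sV i|)]
        congr 1
        · apply Finset.sum_congr rfl
          intro i hi
          rw [abs_of_nonneg (sub_nonneg.mpr (Finset.mem_filter.mp hi).2)]
        · apply Finset.sum_congr rfl
          intro i hi
          have hlt := not_le.mp (Finset.mem_filter.mp hi).2
          rw [abs_of_neg (by linarith)]
          ring
      have hnotsum : ∑ i ∈ Finset.univ.filter (fun i => ¬ (sV i ≤ pS S i)), (sV i - pS S i)
          = (∑ i ∈ P, pS S i) - (∑ i ∈ P, sV i) := by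
        have h1 : (∑ i ∈ P, sV i)
            + ∑ i ∈ Finset.univ.filter (fun i => ¬ (sV i ≤ pS S i)), sV i = 1 := by
          rw [hPdef, Finset.sum_filter_add_sum_filter_not]
          exact hsVsum
        have h2 : (∑ i ∈ P, pS S i)
            + ∑ i ∈ Finset.univ.filter (fun i => ¬ (sV i ≤ pS S i)), pS S i = 1 := by
          rw [hPdef, Finset.sum_filter_add_sum_filter_not]
          exact hpSsum S
        rw [Finset.sum_sub_distrib]
        linarith
      rw [hsplit, hnotsum, Finset.sum_sub_distrib]
      linarith
    -- per-pair disagreement bound for good datasets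
    set creal := 4 * (Real.exp ε - 1) + 4 * δ + β with hcrealdef
    have hcreal0 : 0 ≤ creal := by
      rw [hcrealdef]
      nlinarith
    have hpair : ∀ S1 S2 : Fin m → X, S1 ∈ Good → S2 ∈ Good →
        OWPGAux.seedM n K {r : OWPGAux.Seed n K |
          pick (OWPGAux.outFn (pS S1) r) ≠ pick (OWPGAux.outFn (pS S2) r)}
          ≤ ENNReal.ofReal creal := by
      intro S1 S2 h1 h2
      have hset : {r : OWPGAux.Seed n K |
          pick (OWPGAux.outFn (pS S1) r) ≠ pick (OWPGAux.outFn (pS S2) r)}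
          = {r : OWPGAux.Seed n K | OWPGAux.outFn (pS S1) r ≠ OWPGAux.outFn (pS S2) r} := by
        ext r
        simp only [Set.mem_setOf_eq]
        constructor
        · intro hne3 heq
          exact hne3 (by rw [heq])
        · intro hne3 heq
          exact hne3 (hpickinj _ _ heq)
      rw [hset]
      calc OWPGAux.seedM n K {r : OWPGAux.Seed n K |
            OWPGAux.outFn (pS S1) r ≠ OWPGAux.outFn (pS S2) r}
          ≤ ENNReal.ofReal ((∑ i, |pS S1 i - pS S2 i|) + (1 - 1/(n:ℝ)) ^ K) :=
            OWPGAux.disagree_bound (hpSb S1) (hpSb S2) (hpSsum S1) (hpSsum S2)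
        _ ≤ ENNReal.ofReal creal := by
            apply ENNReal.ofReal_le_ofReal
            have t1 := hgood_tv S1 h1
            have t2 := hgood_tv S2 h2
            have tri : ∑ i, |pS S1 i - pS S2 i|
                ≤ (∑ i, |pS S1 i - sV i|) + ∑ i, |pS S2 i - sV i| := by
              rw [← Finset.sum_add_distrib]
              apply Finset.sum_le_sum
              intro i _
              calc |pS S1 i - pS S2 i| ≤ |pS S1 i - sV i| + |sV i - pS S2 i| :=
                    abs_sub_le _ _ _
                _ = |pS S1 i - sV i| + |pS S2 i - sV i| := by rw [abs_sub_comm (sV i)]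
            have hKb : (1 - 1/(n:ℝ)) ^ K ≤ β := le_of_lt hK
            rw [hcrealdef]
            linarith
    -- the outer measure argument
    set M := ((μm.prod μm).prod (OWPGAux.seedM n K)) with hMdef
    haveI : IsProbabilityMeasure M := by rw [hMdef]; infer_instance
    set Agr := {q : ((Fin m → X) × (Fin m → X)) × OWPGAux.Seed n K |
      pick (OWPGAux.outFn (pS q.1.1) q.2) = pick (OWPGAux.outFn (pS q.1.2) q.2)} with hAgrdef
    set N := (toMeasurable M Agr)ᶜ with hNdef
    have hNmeas : MeasurableSet N := (measurableSet_toMeasurable M Agr).compl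
    have hNsub : N ⊆ Agrᶜ := Set.compl_subset_compl.mpr (subset_toMeasurable M Agr)
    have hinner : ∀ V : Set (Fin m → X), MeasurableSet V → (V ∩ Good = ∅) →
        μm V ≤ ENNReal.ofReal β := by
      intro V hV hVG
      exact OWPGAux.inner_bound hGood hV hVG
    have hMN : M N ≤ ENNReal.ofReal creal + (ENNReal.ofReal β + ENNReal.ofReal β) := by
      rw [hMdef, Measure.prod_apply hNmeas]
      set g := fun x : (Fin m → X) × (Fin m → X) =>
        OWPGAux.seedM n K (Prod.mk x ⁻¹' N) with hgdef
      have hgmeas : Measurable g := measurable_measure_prodMk_left hNmeas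
      have hg1 : ∀ x, g x ≤ 1 := fun x => prob_le_one
      have hgood2 : ∀ x : (Fin m → X) × (Fin m → X), x.1 ∈ Good → x.2 ∈ Good →
          g x ≤ ENNReal.ofReal creal := by
        intro x h1 h2
        calc g x ≤ OWPGAux.seedM n K {r : OWPGAux.Seed n K |
              pick (OWPGAux.outFn (pS x.1) r) ≠ pick (OWPGAux.outFn (pS x.2) r)} := by
              apply measure_mono
              intro r hr
              have hin := hNsub hr
              simpa [hAgrdef] using hin
          _ ≤ ENNReal.ofReal creal := hpair _ _ h1 h2
      calc ∫⁻ x, g x ∂(μm.prod μm)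
          ≤ ENNReal.ofReal creal + (μm.prod μm) {x | ENNReal.ofReal creal < g x} :=
            OWPGAux.lintegral_le_of_bound hgmeas hg1 _
        _ ≤ ENNReal.ofReal creal + (ENNReal.ofReal β + ENNReal.ofReal β) := by
            apply add_le_add_right
            set U := {x : (Fin m → X) × (Fin m → X) | ENNReal.ofReal creal < g x} with hUdef
            have hUmeas : MeasurableSet U := hgmeas measurableSet_Ioi
            rw [Measure.prod_apply hUmeas]
            set g2 := fun S1 => μm (Prod.mk S1 ⁻¹' U) with hg2def
            have hg2meas : Measurable g2 := measurable_measure_prodMk_left hUmeas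
            have hg21 : ∀ x, g2 x ≤ 1 := fun x => prob_le_one
            have hg2good : ∀ S1, S1 ∈ Good → g2 S1 ≤ ENNReal.ofReal β := by
              intro S1 h1
              apply hinner _ (measurable_prodMk_left hUmeas)
              apply Set.eq_empty_iff_forall_notMem.mpr
              rintro S2 ⟨hS2U, hS2G⟩
              have hUx : (S1, S2) ∈ U := hS2U
              rw [hUdef] at hUx
              exact absurd (hgood2 (S1, S2) h1 hS2G) (not_le.mpr hUx)
            calc ∫⁻ S1, g2 S1 ∂μm
                ≤ ENNReal.ofReal β + μm {S1 | ENNReal.ofReal β < g2 S1} :=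
                  OWPGAux.lintegral_le_of_bound hg2meas hg21 _
              _ ≤ ENNReal.ofReal β + ENNReal.ofReal β := by
                  apply add_le_add_right
                  apply hinner _ (hg2meas measurableSet_Ioi)
                  apply Set.eq_empty_iff_forall_notMem.mpr
                  rintro S1 ⟨hS1U, hS1G⟩
                  exact absurd (hg2good S1 hS1G) (not_le.mpr hS1U)
    -- conclude
    have hMAgr : M Agr = M Nᶜ := by
      rw [hNdef, compl_compl]
      exact (measure_toMeasurable _).symm
    have hMT : M Nᶜ = 1 - M N := prob_compl_eq_one_sub hNmeas
    have hle1 : M N ≤ 1 := prob_le_one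
    have hTr : (M Nᶜ).toReal = 1 - (M N).toReal := by
      rw [hMT, ENNReal.toReal_sub_of_le hle1 (by simp)]
      simp
    have hMNr : (M N).toReal ≤ creal + 2 * β := by
      have h1 := ENNReal.toReal_mono (by simp) hMN
      rw [← ENNReal.ofReal_add hβ.le hβ.le, ← ENNReal.ofReal_add hcreal0 (by linarith)] at hMN
      calc (M N).toReal ≤ (ENNReal.ofReal (creal + (β + β))).toReal :=
            ENNReal.toReal_mono (by simp) hMN
        _ = creal + (β + β) := ENNReal.toReal_ofReal (by linarith)
        _ = creal + 2 * β := by ring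
    have hfinal : (M Agr).toReal = 1 - (M N).toReal := by rw [hMAgr, hTr]
    have hgoal : (1:ℝ) - 4 * (β + 2 * ε + δ) ≤ (M Agr).toReal := by
      rw [hfinal]
      have hexp2 : Real.exp ε - 1 ≤ 2 * ε := OWPGAux.exp_sub_one_le hε.le hε1.le
      rw [hcrealdef] at hMNr
      linarith
    exact hgoal
end
end

section
/- Let H be a finite set and let O be a uniformly random linear ordering of H. Let H1, H2 be nonempty subsets of H, and let f1 and f2 be the first elements of H1 and H2 respectively according to O. Then Pr[f1 ≠ f2] = |H1 Δ H2| / |H1 ∪ H2|, where Δ denotes symmetric difference. -/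
open MeasureTheory

noncomputable section

def firstElem {α : Type*} [Fintype α] [DecidableEq α] {n : ℕ} (σ : α ≃ Fin n)
    (S : Finset α) (hS : S.Nonempty) : α :=
  σ.symm ((S.image σ).min' (hS.image σ))

section aux
variable {α : Type*} [Fintype α] [DecidableEq α] {n : ℕ}

lemma firstElem_mem (σ : α ≃ Fin n) (S : Finset α) (hS : S.Nonempty) :
    firstElem σ S hS ∈ S := by
  obtain ⟨a, ha, hae⟩ := Finset.mem_image.mp ((S.image σ).min'_mem (hS.image σ))
  simpa [firstElem, ← hae] using ha

lemma firstElem_eq_of_mem (σ : α ≃ Fin n) {S U : Finset α} (hSU : S ⊆ U)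
    (hS : S.Nonempty) (hU : U.Nonempty) (h : firstElem σ U hU ∈ S) :
    firstElem σ S hS = firstElem σ U hU := by
  apply σ.injective
  simp only [firstElem, Equiv.apply_symm_apply]
  apply le_antisymm
  · exact Finset.min'_le _ _ (by
      have : σ (firstElem σ U hU) ∈ S.image σ := Finset.mem_image_of_mem σ h
      simpa [firstElem, Equiv.apply_symm_apply] using this)
  · exact Finset.min'_le _ _ (Finset.image_subset_image hSU ((S.image σ).min'_mem (hS.image σ)))

omit [Fintype α] in
lemma image_swap_eq {U : Finset α} {x y : α} (hx : x ∈ U) (hy : y ∈ U) :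
    U.image (Equiv.swap x y) = U := by
  ext a
  simp only [Finset.mem_image]
  constructor
  · rintro ⟨b, hb, rfl⟩
    rcases eq_or_ne b x with rfl | hbx
    · simpa [Equiv.swap_apply_left]
    rcases eq_or_ne b y with rfl | hby
    · simpa [Equiv.swap_apply_right]
    · simpa [Equiv.swap_apply_of_ne_of_ne hbx hby]
  · intro ha
    refine ⟨Equiv.swap x y a, ?_, by simp⟩
    rcases eq_or_ne a x with rfl | hax
    · simpa [Equiv.swap_apply_left]
    rcases eq_or_ne a y with rfl | hay
    · simpa [Equiv.swap_apply_right]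
    · simpa [Equiv.swap_apply_of_ne_of_ne hax hay]

lemma firstElem_swap (σ : α ≃ Fin n) {U : Finset α} {x y : α} (hx : x ∈ U) (hy : y ∈ U)
    (hU : U.Nonempty) :
    firstElem ((Equiv.swap x y).trans σ) U hU = Equiv.swap x y (firstElem σ U hU) := by
  have himg : U.image ((Equiv.swap x y).trans σ) = U.image σ := by
    rw [show ((Equiv.swap x y).trans σ : α → Fin n) = σ ∘ (Equiv.swap x y) from rfl,
      ← Finset.image_image, image_swap_eq hx hy]
  simp only [firstElem, Equiv.symm_trans_apply, Equiv.symm_swap, himg]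

end aux

/-- For a uniformly random linear ordering of a finite set `H` (encoded as a
uniformly random bijection `H ≃ Fin |H|`), the probability that two nonempty
subsets `H1, H2` have different first elements equals
`|H1 Δ H2| / |H1 ∪ H2|`. -/
theorem random_order_first_elements {α : Type*} [Fintype α] [DecidableEq α]
    (H1 H2 : Finset α) (h1 : H1.Nonempty) (h2 : H2.Nonempty) :
    (@PMF.uniformOfFintype (α ≃ Fin (Fintype.card α)) _
        ⟨Fintype.equivFin α⟩).toOuterMeasure
      {σ | firstElem σ H1 h1 ≠ firstElem σ H2 h2} =
      ((symmDiff H1 H2).card : ENNReal) / ((H1 ∪ H2).card : ENNReal) := by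
  classical
  haveI : Nonempty (α ≃ Fin (Fintype.card α)) := ⟨Fintype.equivFin α⟩
  set n := Fintype.card α
  set U : Finset α := H1 ∪ H2 with hUdef
  have hU : U.Nonempty := h1.mono Finset.subset_union_left
  have hΔU : symmDiff H1 H2 ⊆ U := by
    intro a ha
    rw [Finset.mem_symmDiff] at ha
    rcases ha with ⟨h, _⟩ | ⟨h, _⟩ <;> simp [hUdef, h]
  -- event rewriting
  have hevent : {σ : α ≃ Fin n | firstElem σ H1 h1 ≠ firstElem σ H2 h2}
      = {σ : α ≃ Fin n | firstElem σ U hU ∈ symmDiff H1 H2} := by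
    ext σ
    have hmU : firstElem σ U hU ∈ U := firstElem_mem σ U hU
    simp only [Set.mem_setOf_eq, Finset.mem_symmDiff]
    by_cases hm1 : firstElem σ U hU ∈ H1 <;> by_cases hm2 : firstElem σ U hU ∈ H2
    · have e1 : firstElem σ H1 h1 = firstElem σ U hU :=
        firstElem_eq_of_mem σ Finset.subset_union_left h1 hU hm1
      have e2 : firstElem σ H2 h2 = firstElem σ U hU :=
        firstElem_eq_of_mem σ Finset.subset_union_right h2 hU hm2
      simp [e1, e2, hm1, hm2]
    · have e1 : firstElem σ H1 h1 = firstElem σ U hU :=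
        firstElem_eq_of_mem σ Finset.subset_union_left h1 hU hm1
      have hne : firstElem σ H1 h1 ≠ firstElem σ H2 h2 := by
        rw [e1]
        intro h
        have := firstElem_mem σ H2 h2
        rw [← h] at this
        exact hm2 this
      simp [hne, hm1, hm2]
    · have e2 : firstElem σ H2 h2 = firstElem σ U hU :=
        firstElem_eq_of_mem σ Finset.subset_union_right h2 hU hm2
      have hne : firstElem σ H1 h1 ≠ firstElem σ H2 h2 := by
        rw [e2]
        intro h
        have := firstElem_mem σ H1 h1
        rw [h] at this
        exact hm1 this
      simp [hne, hm1, hm2]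
    · exact absurd hmU (fun h => (Finset.mem_union.mp h).elim hm1 hm2)
  -- fiber counts
  set c : α → ℕ := fun x => (Finset.univ.filter (fun σ : α ≃ Fin n => firstElem σ U hU = x)).card
    with hc
  have hcconst : ∀ x ∈ U, ∀ y ∈ U, c x = c y := by
    intro x hx y hy
    apply Finset.card_bij (fun σ _ => (Equiv.swap x y).trans σ)
    · intro σ hσ
      simp only [Finset.mem_filter, Finset.mem_univ, true_and] at hσ ⊢
      rw [firstElem_swap σ hx hy hU, hσ, Equiv.swap_apply_left]
    · intro σ₁ _ σ₂ _ h
      have := congrArg (fun τ : α ≃ Fin n => (Equiv.swap x y).symm.trans τ) h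
      simpa [← Equiv.trans_assoc] using this
    · intro τ hτ
      simp only [Finset.mem_filter, Finset.mem_univ, true_and] at hτ
      refine ⟨(Equiv.swap x y).trans τ, ?_, ?_⟩
      · simp only [Finset.mem_filter, Finset.mem_univ, true_and]
        rw [firstElem_swap τ hx hy hU, hτ, Equiv.swap_apply_right]
      · rw [← Equiv.trans_assoc]
        simp
  obtain ⟨x₀, hx₀⟩ := id hU
  have hcardE : Fintype.card (α ≃ Fin n) = U.card * c x₀ := by
    rw [← Finset.card_univ,
      Finset.card_eq_sum_card_fiberwise (f := fun σ : α ≃ Fin n => firstElem σ U hU) (t := U)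
        (fun σ _ => firstElem_mem σ U hU)]
    rw [Finset.sum_congr rfl (fun x hx => hcconst x hx x₀ hx₀)]
    simp [mul_comm]
  have hcardEv : (Finset.univ.filter
      (fun σ : α ≃ Fin n => firstElem σ U hU ∈ symmDiff H1 H2)).card
      = (symmDiff H1 H2).card * c x₀ := by
    rw [Finset.card_eq_sum_card_fiberwise (f := fun σ : α ≃ Fin n => firstElem σ U hU)
        (s := Finset.univ.filter (fun σ : α ≃ Fin n => firstElem σ U hU ∈ symmDiff H1 H2))
        (t := symmDiff H1 H2) (fun σ hσ => (Finset.mem_filter.mp hσ).2)]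
    have key : ∀ x ∈ symmDiff H1 H2,
        ((Finset.univ.filter (fun σ : α ≃ Fin n => firstElem σ U hU ∈ symmDiff H1 H2)).filter
          (fun σ => firstElem σ U hU = x)).card = c x₀ := by
      intro x hx
      rw [Finset.filter_filter]
      have heq : (Finset.univ.filter
          (fun σ : α ≃ Fin n => firstElem σ U hU ∈ symmDiff H1 H2 ∧ firstElem σ U hU = x))
          = Finset.univ.filter (fun σ : α ≃ Fin n => firstElem σ U hU = x) := by
        apply Finset.filter_congr
        intro σ _
        exact ⟨fun h => h.2, fun h => ⟨by rw [h]; exact hx, h⟩⟩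
      rw [heq]
      exact hcconst x (hΔU hx) x₀ hx₀
    rw [Finset.sum_congr rfl key]
    simp [mul_comm]
  have hc0 : c x₀ ≠ 0 := by
    intro h
    have h1' : Fintype.card (α ≃ Fin n) = 0 := by rw [hcardE, h, mul_zero]
    have h2' : Fintype.card (α ≃ Fin n) > 0 := Fintype.card_pos
    omega
  -- compute measure
  rw [hevent, PMF.toOuterMeasure_apply, tsum_fintype]
  have hind : ∀ σ : α ≃ Fin n,
      ({σ : α ≃ Fin n | firstElem σ U hU ∈ symmDiff H1 H2} : Set _).indicator
        (PMF.uniformOfFintype (α ≃ Fin n)) σ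
      = if firstElem σ U hU ∈ symmDiff H1 H2
          then ((Fintype.card (α ≃ Fin n) : ENNReal))⁻¹ else 0 := by
    intro σ
    by_cases h : firstElem σ U hU ∈ symmDiff H1 H2 <;>
      simp [Set.indicator_apply, PMF.uniformOfFintype_apply, h]
  rw [Finset.sum_congr rfl (fun σ _ => hind σ), ← Finset.sum_filter, Finset.sum_const,
    nsmul_eq_mul]
  rw [hcardEv, hcardE, ← div_eq_mul_inv]
  push_cast
  rw [ENNReal.mul_div_mul_right _ _ (by exact_mod_cast hc0) (by simp)]
end
end
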